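/- arXiv:1711.07795 — 3 statements merged into one kernel-verified Lean document; each statement's English description precedes it below -/
import Mathlib

section
/- Let X and Y be nonsingular BV algebras and let α : X → Y be a canonical map with logarithmic Jacobian r_α. Then the inverse α⁻¹ : Y → X is a canonical map, and −α⁻¹(r_α) is a logarithmic Jacobian for α⁻¹. -/
/-!
Common setup: real unital ℤ-graded (graded-)commutative algebras, BV Laplacians,
BV brackets, BV algebra structures, canonical maps and master actions.
-/

/-- Graded commutativity with Koszul signs: `f * g = (-1)^{|f||g|} g * f`
for homogeneous `f`, `g`. -/
def GradedComm {X : Type*} [Ring X] [Algebra ℝ X] (𝒜 : ℤ → Submodule ℝ X) : Prop :=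
  ∀ (i j : ℤ) (f g : X), f ∈ 𝒜 i → g ∈ 𝒜 j → f * g = ((-1 : ℝ) ^ (i * j)) • (g * f)

/-- `D` is a BV Laplacian on the ℤ-graded algebra `X` with grading `𝒜`:
it raises degree by `1`, is a second-order differential operator
(seven-term identity on homogeneous elements), squares to zero and kills `1`. -/
def IsBVLaplacian {X : Type*} [Ring X] [Algebra ℝ X]
    (𝒜 : ℤ → Submodule ℝ X) (D : X →ₗ[ℝ] X) : Prop :=
  (∀ (i : ℤ) (f : X), f ∈ 𝒜 i → D f ∈ 𝒜 (i + 1)) ∧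
  (∀ (i j k : ℤ) (f g h : X), f ∈ 𝒜 i → g ∈ 𝒜 j → h ∈ 𝒜 k →
    D (f * g * h) =
      -(D f * g * h) - ((-1 : ℝ) ^ i) • (f * D g * h)
        - ((-1 : ℝ) ^ (i + j)) • (f * g * D h)
        + D (f * g) * h + ((-1 : ℝ) ^ ((i + 1) * j)) • (g * D (f * h))
        + ((-1 : ℝ) ^ i) • (f * D (g * h))) ∧
  (∀ f : X, D (D f) = 0) ∧
  D 1 = 0

/-- `Br` is the BV bracket associated with the Laplacian `D`: it is the bilinear
map given on homogeneous `f`, `g` by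
`(f,g) = (-1)^{|f|} (D(fg) - (Df)g - (-1)^{|f|} f(Dg))`. -/
def IsBVBracketOf {X : Type*} [Ring X] [Algebra ℝ X]
    (𝒜 : ℤ → Submodule ℝ X) (D : X →ₗ[ℝ] X) (Br : X →ₗ[ℝ] X →ₗ[ℝ] X) : Prop :=
  ∀ (i j : ℤ) (f g : X), f ∈ 𝒜 i → g ∈ 𝒜 j →
    Br f g = ((-1 : ℝ) ^ i) • (D (f * g) - D f * g - ((-1 : ℝ) ^ i) • (f * D g))

/-- A BV algebra structure on the ℤ-graded algebra `X` with grading `𝒜`: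
graded commutativity, a BV Laplacian `Δ` and its associated BV bracket. -/
structure BVAlgebraStr (X : Type*) [Ring X] [Algebra ℝ X]
    (𝒜 : ℤ → Submodule ℝ X) where
  grcomm : GradedComm 𝒜
  Δ : X →ₗ[ℝ] X
  isBVLaplacian : IsBVLaplacian 𝒜 Δ
  bracket : X →ₗ[ℝ] X →ₗ[ℝ] X
  isBracket : IsBVBracketOf 𝒜 Δ bracket

/-- The bracket `Br` is nonsingular: its center is exactly `ℝ·1`. -/
def IsNonsingularBracket {X : Type*} [Ring X] [Algebra ℝ X]
    (Br : X →ₗ[ℝ] X →ₗ[ℝ] X) : Prop :=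
  ∀ c : X, (∀ f : X, Br f c = 0) ↔ ∃ r : ℝ, c = algebraMap ℝ X r

/-- `α` is a canonical map with logarithmic Jacobian `r`: a degree-preserving
isomorphism of unital algebras with `Δ_Y(αf) - α(Δ_X f) + (r, αf)_Y = 0`,
where `r` has degree `0`. -/
def IsCanonicalWithJacobian {X Y : Type*} [Ring X] [Algebra ℝ X] [Ring Y] [Algebra ℝ Y]
    (𝒜 : ℤ → Submodule ℝ X) (ℬ : ℤ → Submodule ℝ Y)
    (ΔX : X →ₗ[ℝ] X) (ΔY : Y →ₗ[ℝ] Y) (BrY : Y →ₗ[ℝ] Y →ₗ[ℝ] Y)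
    (α : X ≃ₐ[ℝ] Y) (r : Y) : Prop :=
  (∀ (i : ℤ) (f : X), f ∈ 𝒜 i → α f ∈ ℬ i) ∧ r ∈ ℬ 0 ∧
  (∀ f : X, ΔY (α f) - α (ΔX f) + BrY r (α f) = 0)

/-- `ξ` is an infinitesimal canonical map with logarithmic Jacobian `e`:
a degree-`0` derivation with `Δ(ξf) - ξ(Δf) + (e, f) = 0`, `e` of degree `0`. -/
def IsInfCanonicalWithJacobian {X : Type*} [Ring X] [Algebra ℝ X]
    {𝒜 : ℤ → Submodule ℝ X} (B : BVAlgebraStr X 𝒜)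
    (ξ : X →ₗ[ℝ] X) (e : X) : Prop :=
  (∀ (i : ℤ) (f : X), f ∈ 𝒜 i → ξ f ∈ 𝒜 i) ∧
  (∀ f g : X, ξ (f * g) = ξ f * g + f * ξ g) ∧
  e ∈ 𝒜 0 ∧
  (∀ f : X, B.Δ (ξ f) - ξ (B.Δ f) + B.bracket e f = 0)

/-- `S` is a BV quantum master action: a degree-`0` element satisfying the
quantum master equation `ΔS + (1/2)(S,S) = 0`. -/
def IsMasterAction {X : Type*} [Ring X] [Algebra ℝ X]
    {𝒜 : ℤ → Submodule ℝ X} (B : BVAlgebraStr X 𝒜) (S : X) : Prop :=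
  S ∈ 𝒜 0 ∧ B.Δ S + (1 / 2 : ℝ) • B.bracket S S = 0


/-!
A canonical map intertwines the BV brackets: its defining identity says that `α ∘ Δ_X ∘ α⁻¹`
differs from `Δ_Y` by the first-order operator `(r, ·)`, and bracketing with a degree-zero
element is a derivation, so the second-order parts (which are the brackets) agree. Applying
`α⁻¹` to the identity `Δ_Y(αf) - α(Δ_X f) + (r, αf) = 0` with `f = α⁻¹ g` and pulling the
bracket back then gives the defining identity of `α⁻¹` with Jacobian `-α⁻¹(r)`.
-/

theorem neg_one_zpow_mul_self {R : Type*} [DivisionRing R] (i : ℤ) :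
    (-1 : R) ^ i * (-1 : R) ^ i = 1 := by
  rw [← zpow_add₀ (by norm_num), ← two_mul, zpow_mul]
  norm_num

section GradedMaps

open DirectSum

variable {ι M N σ τ F : Type*} [DecidableEq ι] [AddCommMonoid M] [AddCommMonoid N]
  [SetLike σ M] [AddSubmonoidClass σ M] [SetLike τ N] [AddSubmonoidClass τ N]
  (ℳ : ι → σ) (𝒩 : ι → τ) [Decomposition ℳ] [Decomposition 𝒩]
  [FunLike F M N] [AddMonoidHomClass F M N]

theorem decompose_map_apply {φ : F} (hφ : ∀ i x, x ∈ ℳ i → φ x ∈ 𝒩 i) (x : M) (i : ι) :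
    (decompose 𝒩 (φ x) i : N) = φ (decompose ℳ x i) := by
  induction x using Decomposition.inductionOn ℳ with
  | zero => simp
  | @homogeneous j m =>
    obtain rfl | hji := eq_or_ne j i
    · rw [decompose_of_mem_same 𝒩 (hφ j m m.2), decompose_of_mem_same ℳ m.2]
    · rw [decompose_of_mem_ne 𝒩 (hφ j m m.2) hji, decompose_of_mem_ne ℳ m.2 hji, map_zero]
  | add x y hx hy => simp [hx, hy]

theorem mem_of_map_mem {φ : F} (hφ : ∀ i x, x ∈ ℳ i → φ x ∈ 𝒩 i)
    (hinj : Function.Injective φ) {x : M} {i : ι} (hx : φ x ∈ 𝒩 i) : x ∈ ℳ i := by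
  have hproj : φ (decompose ℳ x i) = φ x := by
    rw [← decompose_map_apply ℳ 𝒩 hφ, decompose_of_mem_same 𝒩 hx]
  exact hinj hproj ▸ (decompose ℳ x i).2

end GradedMaps

namespace BVAlgebraStr

variable {Y : Type*} [Ring Y] [Algebra ℝ Y] {ℬ : ℤ → Submodule ℝ Y} [SetLike.GradedMonoid ℬ]
  (B : BVAlgebraStr Y ℬ)

/-- Expand both sides by the definition of the bracket and `Δ(rfg)` by the seven-term identity;
what remains cancels after moving `r` and `Δr` past `f` by graded commutativity. -/
theorem bracket_mul_of_mem_zero {i j : ℤ} {r f g : Y} (hr : r ∈ ℬ 0) (hf : f ∈ ℬ i)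
    (hg : g ∈ ℬ j) :
    B.bracket r (f * g) = B.bracket r f * g + ((-1 : ℝ) ^ i) • (f * B.bracket r g) := by
  obtain ⟨hdeg, hseven, -, -⟩ := B.isBVLaplacian
  have hrfg := B.isBracket 0 (i + j) r (f * g) hr (SetLike.mul_mem_graded hf hg)
  have hrf := B.isBracket 0 i r f hr hf
  have hrg := B.isBracket 0 j r g hr hg
  have hΔ := hseven 0 i j r f g hr hf hg
  have hΔr : B.Δ r ∈ ℬ 1 := by simpa using hdeg 0 r hr
  have hcommΔr : f * B.Δ r = ((-1 : ℝ) ^ i) • (B.Δ r * f) := by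
    simpa using B.grcomm i 1 f (B.Δ r) hf hΔr
  have hcommr : f * r = r * f := by simpa using (B.grcomm 0 i r f hr hf).symm
  simp only [zpow_zero, one_smul, zero_add, one_mul] at hrfg hrf hrg hΔ
  rw [hrfg, hrf, hrg, ← mul_assoc, hΔ]
  simp only [mul_sub, sub_mul, smul_sub, mul_assoc]
  rw [← mul_assoc f (B.Δ r) g, hcommΔr, ← mul_assoc f r (B.Δ g), hcommr]
  simp only [smul_mul_assoc, smul_smul, mul_assoc]
  have hsign := neg_one_zpow_mul_self (R := ℝ) i
  match_scalars <;> first | ring1 | linear_combination hsign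

end BVAlgebraStr

namespace IsCanonicalWithJacobian

variable {X Y : Type*} [Ring X] [Algebra ℝ X] [Ring Y] [Algebra ℝ Y]
  {𝒜 : ℤ → Submodule ℝ X} {ℬ : ℤ → Submodule ℝ Y}

theorem map_Δ {ΔX : X →ₗ[ℝ] X} {ΔY : Y →ₗ[ℝ] Y} {BrY : Y →ₗ[ℝ] Y →ₗ[ℝ] Y} {α : X ≃ₐ[ℝ] Y}
    {r : Y} (hcan : IsCanonicalWithJacobian 𝒜 ℬ ΔX ΔY BrY α r) (f : X) :
    α (ΔX f) = ΔY (α f) + BrY r (α f) := by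
  rw [eq_comm, ← sub_eq_zero, ← hcan.2.2 f]
  abel

variable {BX : BVAlgebraStr X 𝒜} {BY : BVAlgebraStr Y ℬ} {α : X ≃ₐ[ℝ] Y} {r : Y}

theorem map_bracket_of_mem [SetLike.GradedMonoid ℬ]
    (hcan : IsCanonicalWithJacobian 𝒜 ℬ BX.Δ BY.Δ BY.bracket α r)
    {i j : ℤ} {f g : X} (hf : f ∈ 𝒜 i) (hg : g ∈ 𝒜 j) :
    α (BX.bracket f g) = BY.bracket (α f) (α g) := by
  have hαf := hcan.1 i f hf
  have hαg := hcan.1 j g hg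
  rw [BX.isBracket i j f g hf hg, BY.isBracket i j (α f) (α g) hαf hαg]
  simp only [map_smul, map_sub, map_mul, hcan.map_Δ]
  rw [BY.bracket_mul_of_mem_zero hcan.2.1 hαf hαg]
  simp only [mul_add, add_mul, smul_sub, smul_add, smul_smul]
  match_scalars <;> ring1

theorem map_bracket [GradedAlgebra 𝒜] [SetLike.GradedMonoid ℬ]
    (hcan : IsCanonicalWithJacobian 𝒜 ℬ BX.Δ BY.Δ BY.bracket α r) (f g : X) :
    α (BX.bracket f g) = BY.bracket (α f) (α g) := by
  induction f using DirectSum.Decomposition.inductionOn 𝒜 with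
  | zero => simp
  | homogeneous f =>
    induction g using DirectSum.Decomposition.inductionOn 𝒜 with
    | zero => simp
    | homogeneous g => exact hcan.map_bracket_of_mem f.2 g.2
    | add g g' hg hg' => simp only [map_add, hg, hg']
  | add f f' hf hf' => simp only [map_add, LinearMap.add_apply, hf, hf']

end IsCanonicalWithJacobian

theorem stmt5_general {X Y : Type*} [Ring X] [Algebra ℝ X] [Ring Y] [Algebra ℝ Y]
    (𝒜 : ℤ → Submodule ℝ X) [GradedAlgebra 𝒜]
    (ℬ : ℤ → Submodule ℝ Y) [GradedAlgebra ℬ]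
    (BX : BVAlgebraStr X 𝒜) (BY : BVAlgebraStr Y ℬ)
    (α : X ≃ₐ[ℝ] Y) (r : Y)
    (hcan : IsCanonicalWithJacobian 𝒜 ℬ BX.Δ BY.Δ BY.bracket α r) :
    IsCanonicalWithJacobian ℬ 𝒜 BY.Δ BX.Δ BX.bracket α.symm (-(α.symm r)) := by
  have hsymm_deg : ∀ (i : ℤ) (g : Y), g ∈ ℬ i → α.symm g ∈ 𝒜 i := fun i g hg =>
    mem_of_map_mem 𝒜 ℬ hcan.1 α.injective (by rwa [α.apply_symm_apply])
  refine ⟨hsymm_deg, neg_mem (hsymm_deg 0 r hcan.2.1), fun g => α.injective ?_⟩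
  simp only [map_add, map_sub, map_neg, LinearMap.neg_apply, map_zero, hcan.map_Δ,
    hcan.map_bracket, α.apply_symm_apply]
  abel

/-- the inverse of a canonical map is canonical, with logarithmic
Jacobian `-α⁻¹(r_α)`. -/
theorem stmt5 {X Y : Type*} [Ring X] [Algebra ℝ X] [Ring Y] [Algebra ℝ Y]
    (𝒜 : ℤ → Submodule ℝ X) [GradedAlgebra 𝒜]
    (ℬ : ℤ → Submodule ℝ Y) [GradedAlgebra ℬ]
    (BX : BVAlgebraStr X 𝒜) (BY : BVAlgebraStr Y ℬ)
    (hX : IsNonsingularBracket BX.bracket) (hY : IsNonsingularBracket BY.bracket)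
    (α : X ≃ₐ[ℝ] Y) (r : Y)
    (hcan : IsCanonicalWithJacobian 𝒜 ℬ BX.Δ BY.Δ BY.bracket α r) :
    IsCanonicalWithJacobian ℬ 𝒜 BY.Δ BX.Δ BX.bracket α.symm (-(α.symm r)) :=
  stmt5_general 𝒜 ℬ BX BY α r hcan
end

section
/- Let X be a nonsingular BV algebra and let ξ be an infinitesimal canonical map of X with logarithmic Jacobian e_ξ. Then Δ_X e_ξ = 0. -/
/-!
Applying `Δ` to the defining relation of `ξ` and using `Δ² = 0` shows that the operator
`(e, ·) = ξΔ - Δξ` anticommutes with `Δ`. Since `e` has degree `0`, the BV identity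
`Δ(e, g) = (Δe, g) - (e, Δg)` turns this into `(Δe, ·) = 0`, and by graded antisymmetry `Δe`
lies in the BV center. Nonsingularity puts `Δe` into `ℝ·1`, which has degree `0`, whereas `Δe`
has degree `1`; hence `Δe = 0`.
-/

lemma mul_commutator_add_commutator_mul_eq_zero {R : Type*} [Ring R] {d : R} (hd : d * d = 0)
    (x : R) : d * (x * d - d * x) + (x * d - d * x) * d = 0 := by
  calc d * (x * d - d * x) + (x * d - d * x) * d = x * (d * d) - d * d * x := by noncomm_ring
    _ = 0 := by simp [hd]

theorem IsNonsingularBracket.eq_zero_of_forall_bracket_eq_zero {X : Type*} [Ring X]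
    [Algebra ℝ X] {𝒜 : ℤ → Submodule ℝ X} [DirectSum.Decomposition 𝒜] [SetLike.GradedOne 𝒜]
    {Br : X →ₗ[ℝ] X →ₗ[ℝ] X} (hX : IsNonsingularBracket Br) {i : ℤ} (hi : i ≠ 0) {c : X}
    (hc : c ∈ 𝒜 i) (hcentral : ∀ f, Br f c = 0) : c = 0 := by
  obtain ⟨r, rfl⟩ := (hX c).mp hcentral
  by_contra hne
  exact hi (DirectSum.degree_eq_of_mem_mem 𝒜 hc (SetLike.algebraMap_mem_graded 𝒜 r) hne)

namespace BVAlgebraStr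

variable {X : Type*} [Ring X] [Algebra ℝ X] {𝒜 : ℤ → Submodule ℝ X} (B : BVAlgebraStr X 𝒜)
  {i j : ℤ} {a f g : X}

theorem Δ_mem (hf : f ∈ 𝒜 i) : B.Δ f ∈ 𝒜 (i + 1) := B.isBVLaplacian.1 i f hf

@[simp]
theorem Δ_Δ (f : X) : B.Δ (B.Δ f) = 0 := B.isBVLaplacian.2.2.1 f

theorem Δ_mul_Δ : B.Δ * B.Δ = 0 := LinearMap.ext B.Δ_Δ

theorem bracket_comm (hf : f ∈ 𝒜 i) (hg : g ∈ 𝒜 j) :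
    B.bracket f g = -((-1 : ℝ) ^ ((i + 1) * (j + 1))) • B.bracket g f := by
  rw [B.isBracket i j f g hf hg, B.isBracket j i g f hg hf, B.grcomm i j f g hf hg,
    B.grcomm (i + 1) j (B.Δ f) g (B.Δ_mem hf) hg, B.grcomm i (j + 1) f (B.Δ g) hf (B.Δ_mem hg),
    map_smul, add_one_mul, mul_add_one, add_one_mul, mul_add_one]
  simp only [zpow_add₀ (by norm_num : (-1 : ℝ) ≠ 0), zpow_one]
  rcases Int.even_or_odd i with hi | hi <;> rcases Int.even_or_odd j with hj | hj <;>
    simp only [hi.neg_one_zpow, hj.neg_one_zpow] <;> module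

theorem bracket_of_mem_zero (ha : a ∈ 𝒜 0) (hg : g ∈ 𝒜 j) :
    B.bracket a g = B.Δ (a * g) - B.Δ a * g - a * B.Δ g := by
  simpa using B.isBracket 0 j a g ha hg

theorem Δ_bracket_add_bracket_Δ_of_mem_zero (ha : a ∈ 𝒜 0) (hg : g ∈ 𝒜 j) :
    B.Δ (B.bracket a g) + B.bracket a (B.Δ g) = B.bracket (B.Δ a) g := by
  have hΔa : B.Δ a ∈ 𝒜 1 := by simpa using B.Δ_mem ha
  rw [B.bracket_of_mem_zero ha hg, B.bracket_of_mem_zero ha (B.Δ_mem hg),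
    B.isBracket 1 j (B.Δ a) g hΔa hg]
  simp only [map_sub, Δ_Δ, mul_zero, zero_mul, zpow_one]
  module

end BVAlgebraStr

namespace IsInfCanonicalWithJacobian

variable {X : Type*} [Ring X] [Algebra ℝ X] {𝒜 : ℤ → Submodule ℝ X} {B : BVAlgebraStr X 𝒜}
  {ξ : X →ₗ[ℝ] X} {e : X}

theorem mem_zero (h : IsInfCanonicalWithJacobian B ξ e) : e ∈ 𝒜 0 := h.2.2.1

theorem bracket_eq (h : IsInfCanonicalWithJacobian B ξ e) : B.bracket e = ξ * B.Δ - B.Δ * ξ :=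
  LinearMap.ext fun f ↦ by
    simp only [LinearMap.sub_apply, Module.End.mul_apply]
    linear_combination (norm := abel) h.2.2.2 f

theorem Δ_mul_bracket_add_bracket_mul_Δ (h : IsInfCanonicalWithJacobian B ξ e) :
    B.Δ * B.bracket e + B.bracket e * B.Δ = 0 := by
  rw [h.bracket_eq, mul_commutator_add_commutator_mul_eq_zero B.Δ_mul_Δ ξ]

theorem Δ_mem_one (h : IsInfCanonicalWithJacobian B ξ e) : B.Δ e ∈ 𝒜 1 := by
  simpa using B.Δ_mem h.mem_zero

theorem bracket_Δ_left_eq_zero (h : IsInfCanonicalWithJacobian B ξ e) {j : ℤ} {g : X}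
    (hg : g ∈ 𝒜 j) : B.bracket (B.Δ e) g = 0 := by
  rw [← B.Δ_bracket_add_bracket_Δ_of_mem_zero h.mem_zero hg]
  exact LinearMap.congr_fun h.Δ_mul_bracket_add_bracket_mul_Δ g

theorem bracket_Δ_right_eq_zero [DirectSum.Decomposition 𝒜] (h : IsInfCanonicalWithJacobian B ξ e)
    (f : X) : B.bracket f (B.Δ e) = 0 := by
  induction f using DirectSum.Decomposition.inductionOn 𝒜 with
  | zero => simp
  | homogeneous f => rw [B.bracket_comm f.2 h.Δ_mem_one, h.bracket_Δ_left_eq_zero f.2, smul_zero]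
  | add f f' hf hf' => rw [map_add, LinearMap.add_apply, hf, hf', add_zero]

end IsInfCanonicalWithJacobian

/-- the logarithmic Jacobian of an infinitesimal canonical map is
`Δ`-closed. -/
theorem stmt6 {X : Type*} [Ring X] [Algebra ℝ X]
    (𝒜 : ℤ → Submodule ℝ X) [GradedAlgebra 𝒜] (B : BVAlgebraStr X 𝒜)
    (hX : IsNonsingularBracket B.bracket)
    (ξ : X →ₗ[ℝ] X) (e : X) (h : IsInfCanonicalWithJacobian B ξ e) :
    B.Δ e = 0 :=
  hX.eq_zero_of_forall_bracket_eq_zero one_ne_zero h.Δ_mem_one h.bracket_Δ_right_eq_zero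
end

section
/- Let Δ₀ be a nonsingular BV Laplacian on the graded commutative algebra X with BV bracket (−,−)₀, let a₁, a₂ ∈ X be degree-0 elements each satisfying Δ₀aᵢ + (1/2)(aᵢ,aᵢ)₀ = 0, let α₁, α₂ : X → X be invertible degree-preserving morphisms of unital graded algebras, and let X_{αᵢaᵢ} denote X equipped with the BV Laplacian Δ_{αᵢaᵢ} = αᵢ∘(Δ₀ + (aᵢ,−)₀)∘αᵢ⁻¹. Then β = α₂∘α₁⁻¹ is a canonical map from X_{α₁a₁} to X_{α₂a₂}, and −α₂(a₂ − a₁) is a logarithmic Jacobian for β. -/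
/-!
Write `Δᵢ = αᵢ ∘ (Δ + (aᵢ, -)) ∘ αᵢ⁻¹`. Since `aᵢ` has degree `0`, `(aᵢ, -)` is a derivation, so
twisting `Δ` by it does not change the BV bracket; conjugating by the algebra automorphism `α₂`
then transports the bracket, giving `(α₂ c, α₂ g)₂ = α₂ (c, g)` for `c` of degree `0`. With
`g = α₁⁻¹ f` the canonical-map defect `Δ₂(βf) - β(Δ₁f)` is `α₂ (a₂ - a₁, g)`, which the bracket
with `-α₂(a₂ - a₁)` cancels.
-/

open DirectSum

theorem RingEquiv.symm_apply_mem_of_map_mem {ι σ A : Type*} [DecidableEq ι] [AddMonoid ι]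
    [Semiring A] [SetLike σ A] [AddSubmonoidClass σ A] {𝒜 : ι → σ} [GradedRing 𝒜]
    (e : A ≃+* A) (he : ∀ (i : ι) (x : A), x ∈ 𝒜 i → e x ∈ 𝒜 i) (i : ι) (x : A)
    (hx : x ∈ 𝒜 i) : e.symm x ∈ 𝒜 i := by
  let φ : 𝒜 →+*ᵍ 𝒜 := ⟨e.toRingHom, he _ _⟩
  have hcomp : e (decompose 𝒜 (e.symm x) i) = e (e.symm x) := by
    change φ _ = _
    rw [GradedRingHom.map_directSumDecompose]
    change (decompose 𝒜 (e (e.symm x)) i : A) = _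
    rw [e.apply_symm_apply, decompose_of_mem_same 𝒜 hx]
  rw [← e.injective hcomp]
  exact SetLike.coe_mem _

theorem IsBVBracketOf.apply_algEquiv_of_mem_zero {X Y : Type*} [Ring X] [Algebra ℝ X]
    [Ring Y] [Algebra ℝ Y] {𝒜 : ℤ → Submodule ℝ X} {ℬ : ℤ → Submodule ℝ Y} {D : X →ₗ[ℝ] X}
    {α : X ≃ₐ[ℝ] Y} {Br : Y →ₗ[ℝ] Y →ₗ[ℝ] Y}
    (hBr : IsBVBracketOf ℬ (α.toLinearMap.comp (D.comp α.symm.toLinearMap)) Br)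
    (hα : ∀ (i : ℤ) (f : X), f ∈ 𝒜 i → α f ∈ ℬ i) {c g : X} {j : ℤ}
    (hc : c ∈ 𝒜 0) (hg : g ∈ 𝒜 j) :
    Br (α c) (α g) = α (D (c * g) - D c * g - c * D g) := by
  rw [hBr 0 j _ _ (hα 0 c hc) (hα j g hg)]
  simp only [zpow_zero, one_smul, LinearMap.comp_apply, AlgEquiv.toLinearMap_apply, ← map_mul,
    AlgEquiv.symm_apply_apply, map_sub]

namespace BVAlgebraStr

variable {X : Type*} [Ring X] [Algebra ℝ X] {𝒜 : ℤ → Submodule ℝ X} (B : BVAlgebraStr X 𝒜)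

theorem bracket_mul_of_mem_zero_s14 [SetLike.GradedMonoid 𝒜]
    {a g h : X} {j k : ℤ} (ha : a ∈ 𝒜 0) (hg : g ∈ 𝒜 j) (hh : h ∈ 𝒜 k) :
    B.bracket a (g * h)
      = B.bracket a g * h + ((-1 : ℝ) ^ j) • (g * B.bracket a h) := by
  have hDa : B.Δ a ∈ 𝒜 1 := by simpa using B.isBVLaplacian.1 0 a ha
  have hgh : g * h ∈ 𝒜 (j + k) := SetLike.mul_mem_graded hg hh
  have hsign : ((-1 : ℝ) ^ j) * ((-1 : ℝ) ^ j) = 1 := by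
    rw [← zpow_add₀ (by norm_num : (-1 : ℝ) ≠ 0)]
    exact Even.neg_one_zpow ⟨j, rfl⟩
  have hcomm_Da : g * (B.Δ a * h) = ((-1 : ℝ) ^ j) • (B.Δ a * (g * h)) := by
    have := B.grcomm j 1 g (B.Δ a) hg hDa
    rw [mul_one] at this
    rw [← mul_assoc, this, smul_mul_assoc, mul_assoc]
  have hcomm_a : g * (a * B.Δ h) = a * (g * B.Δ h) := by
    have := B.grcomm j 0 g a hg ha
    rw [mul_zero, zpow_zero, one_smul] at this
    rw [← mul_assoc, this, mul_assoc]
  have seven := B.isBVLaplacian.2.1 0 j k a g h ha hg hh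
  simp only [zero_add, zpow_zero, one_smul, one_mul] at seven
  have e1 := B.isBracket 0 (j + k) a (g * h) ha hgh
  have e2 := B.isBracket 0 j a g ha hg
  have e3 := B.isBracket 0 k a h ha hh
  simp only [zpow_zero, one_smul] at e1 e2 e3
  rw [e1, e2, e3, ← mul_assoc, seven]
  simp only [smul_sub, sub_mul, mul_sub,
    smul_smul, hsign, one_smul, mul_assoc, hcomm_Da, hcomm_a]
  abel

theorem bracket_eq_twist_of_mem_zero [SetLike.GradedMonoid 𝒜]
    {a c g : X} {j : ℤ} (ha : a ∈ 𝒜 0) (hc : c ∈ 𝒜 0) (hg : g ∈ 𝒜 j) :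
    (B.Δ + B.bracket a) (c * g) - (B.Δ + B.bracket a) c * g - c * (B.Δ + B.bracket a) g
      = B.bracket c g := by
  have hleibniz := B.bracket_mul_of_mem_zero_s14 ha hc hg
  have hbracket := B.isBracket 0 j c g hc hg
  simp only [zpow_zero, one_smul] at hleibniz hbracket
  rw [hbracket, LinearMap.add_apply, LinearMap.add_apply, LinearMap.add_apply, hleibniz]
  simp only [add_mul, mul_add]
  abel

theorem bracket_conj_twist_apply [GradedAlgebra 𝒜] {Y : Type*} [Ring Y] [Algebra ℝ Y]
    {ℬ : ℤ → Submodule ℝ Y} {α : X ≃ₐ[ℝ] Y} {Br : Y →ₗ[ℝ] Y →ₗ[ℝ] Y} {a c : X}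
    (hBr : IsBVBracketOf ℬ
      (α.toLinearMap.comp ((B.Δ + B.bracket a).comp α.symm.toLinearMap)) Br)
    (hα : ∀ (i : ℤ) (f : X), f ∈ 𝒜 i → α f ∈ ℬ i) (ha : a ∈ 𝒜 0) (hc : c ∈ 𝒜 0) (g : X) :
    Br (α c) (α g) = α (B.bracket c g) := by
  induction g using Decomposition.inductionOn 𝒜 with
  | zero => simp only [map_zero]
  | homogeneous g =>
    rw [hBr.apply_algEquiv_of_mem_zero hα hc g.2, B.bracket_eq_twist_of_mem_zero ha hc g.2]
  | add g g' hg hg' => simp only [map_add, hg, hg']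

end BVAlgebraStr

theorem stmt14_general {X : Type*} [Ring X] [Algebra ℝ X]
    (𝒜 : ℤ → Submodule ℝ X) [GradedAlgebra 𝒜] (B : BVAlgebraStr X 𝒜)
    (a1 a2 : X) (ha1 : a1 ∈ 𝒜 0) (ha2 : a2 ∈ 𝒜 0)
    (α1 α2 : X ≃ₐ[ℝ] X)
    (hdeg1 : ∀ (i : ℤ) (f : X), f ∈ 𝒜 i → α1 f ∈ 𝒜 i)
    (hdeg2 : ∀ (i : ℤ) (f : X), f ∈ 𝒜 i → α2 f ∈ 𝒜 i) :
    ∀ Br2 : X →ₗ[ℝ] X →ₗ[ℝ] X,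
      IsBVBracketOf 𝒜
        (α2.toLinearMap.comp ((B.Δ + B.bracket a2).comp α2.symm.toLinearMap)) Br2 →
      IsCanonicalWithJacobian 𝒜 𝒜
        (α1.toLinearMap.comp ((B.Δ + B.bracket a1).comp α1.symm.toLinearMap))
        (α2.toLinearMap.comp ((B.Δ + B.bracket a2).comp α2.symm.toLinearMap))
        Br2 (α1.symm.trans α2) (-(α2 (a2 - a1))) := by
  intro Br2 hBr2
  have hc : a2 - a1 ∈ 𝒜 0 := sub_mem ha2 ha1
  refine ⟨fun i f hf => hdeg2 i _ (α1.toRingEquiv.symm_apply_mem_of_map_mem hdeg1 i f hf),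
    neg_mem (hdeg2 0 _ hc), fun f => ?_⟩
  have hjac := B.bracket_conj_twist_apply hBr2 hdeg2 ha2 hc (α1.symm f)
  simp only [AlgEquiv.trans_apply, LinearMap.comp_apply, AlgEquiv.toLinearMap_apply,
    AlgEquiv.symm_apply_apply, map_neg, LinearMap.neg_apply]
  rw [hjac]
  simp only [LinearMap.add_apply, map_add, map_sub, LinearMap.sub_apply]
  abel

/-- `β = α₂ ∘ α₁⁻¹` is a canonical map from `X_{α₁a₁}` to
`X_{α₂a₂}` with logarithmic Jacobian `-α₂(a₂ - a₁)`. -/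
theorem stmt14 {X : Type*} [Ring X] [Algebra ℝ X]
    (𝒜 : ℤ → Submodule ℝ X) [GradedAlgebra 𝒜] (B : BVAlgebraStr X 𝒜)
    (hX : IsNonsingularBracket B.bracket)
    (a1 a2 : X) (ha1 : a1 ∈ 𝒜 0) (ha2 : a2 ∈ 𝒜 0)
    (hma1 : B.Δ a1 + (1 / 2 : ℝ) • B.bracket a1 a1 = 0)
    (hma2 : B.Δ a2 + (1 / 2 : ℝ) • B.bracket a2 a2 = 0)
    (α1 α2 : X ≃ₐ[ℝ] X)
    (hdeg1 : ∀ (i : ℤ) (f : X), f ∈ 𝒜 i → α1 f ∈ 𝒜 i)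
    (hdeg2 : ∀ (i : ℤ) (f : X), f ∈ 𝒜 i → α2 f ∈ 𝒜 i) :
    ∀ Br2 : X →ₗ[ℝ] X →ₗ[ℝ] X,
      IsBVBracketOf 𝒜
        (α2.toLinearMap.comp ((B.Δ + B.bracket a2).comp α2.symm.toLinearMap)) Br2 →
      IsCanonicalWithJacobian 𝒜 𝒜
        (α1.toLinearMap.comp ((B.Δ + B.bracket a1).comp α1.symm.toLinearMap))
        (α2.toLinearMap.comp ((B.Δ + B.bracket a2).comp α2.symm.toLinearMap))
        Br2 (α1.symm.trans α2) (-(α2 (a2 - a1))) :=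
  stmt14_general 𝒜 B a1 a2 ha1 ha2 α1 α2 hdeg1 hdeg2
end
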